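/- arXiv:math/0207130 — 2 statements merged into one kernel-verified Lean document; each statement's English description precedes it below -/
import Mathlib

section
/- Let f : N → ℝ be a smooth function on a Riemannian manifold and let p(t), t ∈ (α, β), be a maximal integral curve of −∇f. If for some sequence t_n → β we have p(t_n) → y, and f satisfies a Łojasiewicz inequality near y (there exist a neighborhood U of y, constants c > 0 and δ > 1 with |f − f(y)| ≤ c‖∇f‖^δ on U), then p(t) → y as t → β. -/
open Filter Set

/-- Łojasiewicz convergence for the negative gradient flow: if `p` solves
`ṗ = -∇f(p)` on `(α, β)` with `∇f(p t) ≠ 0`, some sequence `p (t n) → y` with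
`t n → β`, and `f` satisfies the Łojasiewicz inequality
`|f - f(y)| ≤ c‖∇f‖^δ` (with `c > 0`, `δ > 1`) on a neighborhood of `y`,
then `p t → y` as `t → β`. -/
theorem stmt_5 {E : Type*} [NormedAddCommGroup E] [InnerProductSpace ℝ E]
    [CompleteSpace E]
    (f : E → ℝ) (hf : ContDiff ℝ (⊤ : ℕ∞) f)
    (α β : ℝ) (hαβ : α < β) (p : ℝ → E)
    (hp : ∀ t ∈ Ioo α β, HasDerivAt p (-(gradient f (p t))) t)
    (hgrad : ∀ t ∈ Ioo α β, gradient f (p t) ≠ 0)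
    (y : E) (tn : ℕ → ℝ) (htn : ∀ n, tn n ∈ Ioo α β)
    (htnβ : Tendsto tn atTop (nhds β))
    (hpy : Tendsto (fun n => p (tn n)) atTop (nhds y))
    (c δ : ℝ) (hc : 0 < c) (hδ : 1 < δ)
    (U : Set E) (hU : U ∈ nhds y)
    (hLoj : ∀ x ∈ U, |f x - f y| ≤ c * ‖gradient f x‖ ^ δ) :
    Tendsto p (nhdsWithin β (Ioo α β)) (nhds y) := by
  have hδ0 : (0:ℝ) < δ := lt_trans one_pos hδ
  set σ : ℝ := 1 - δ⁻¹ with hσdef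
  have hσ : 0 < σ := by
    have : δ⁻¹ < 1 := inv_lt_one_of_one_lt₀ hδ
    simp [hσdef]; linarith
  have hσ1 : σ < 1 := by
    have : 0 < δ⁻¹ := by positivity
    simp [hσdef]; linarith
  set K : ℝ := σ * (c ^ δ⁻¹)⁻¹ with hKdef
  have hK : 0 < K := by
    have := Real.rpow_pos_of_pos hc δ⁻¹
    positivity
  -- continuity facts
  have hfd : Differentiable ℝ f := hf.differentiable (by simp)
  have hgc : Continuous (gradient f) := by
    have h1 : Continuous (fderiv ℝ f) := hf.continuous_fderiv (by simp)
    exact (InnerProductSpace.toDual ℝ E).symm.continuous.comp h1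
  have hpc : ContinuousOn p (Ioo α β) := fun t ht => ((hp t ht).continuousAt).continuousWithinAt
  set g : ℝ → ℝ := fun t => f (p t) - f y with hgdef
  have hg' : ∀ t ∈ Ioo α β, HasDerivAt g (-(‖gradient f (p t)‖^2)) t := by
    intro t ht
    have hF : HasFDerivAt f (InnerProductSpace.toDual ℝ E (gradient f (p t))) (p t) :=
      (hfd.differentiableAt.hasGradientAt).hasFDerivAt
    have := (hF.comp_hasDerivAt t (hp t ht)).sub_const (f y)
    refine this.congr_deriv ?_
    rw [InnerProductSpace.toDual_apply_apply, inner_neg_right, real_inner_self_eq_norm_sq]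
  have hgcont : ContinuousOn g (Ioo α β) := fun t ht => ((hg' t ht).continuousAt).continuousWithinAt
  have hganti : StrictAntiOn g (Ioo α β) := by
    apply strictAntiOn_of_deriv_neg (convex_Ioo α β) hgcont
    intro t ht
    rw [interior_Ioo] at ht
    rw [(hg' t ht).deriv]
    have h0 : (0:ℝ) < ‖gradient f (p t)‖^2 :=
      pow_pos (norm_pos_iff.mpr (hgrad t ht)) 2
    linarith
  have hgn0 : Tendsto (fun n => g (tn n)) atTop (nhds 0) := by
    have : Tendsto (fun n => f (p (tn n))) atTop (nhds (f y)) :=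
      (hf.continuous.tendsto y).comp hpy
    simpa using this.sub_const (f y)
  have hgge : ∀ t ∈ Ioo α β, 0 ≤ g t := by
    intro t ht
    have hev : ∀ᶠ n in atTop, t < tn n := htnβ.eventually (eventually_gt_nhds ht.2)
    exact le_of_tendsto hgn0 (hev.mono fun n hn => (hganti ht (htn n) hn).le)
  have hgpos : ∀ t ∈ Ioo α β, 0 < g t := by
    intro t ht
    obtain ⟨n, hn⟩ := (htnβ.eventually (eventually_gt_nhds ht.2)).exists
    exact lt_of_le_of_lt (hgge (tn n) (htn n)) (hganti ht (htn n) hn)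
  set h : ℝ → ℝ := fun t => g t ^ σ with hhdef
  have hh' : ∀ t ∈ Ioo α β, HasDerivAt h ((-(‖gradient f (p t)‖^2)) * σ * g t ^ (σ - 1)) t :=
    fun t ht => (hg' t ht).rpow_const (Or.inl (hgpos t ht).ne')
  have hhnn : ∀ t ∈ Ioo α β, 0 ≤ h t := fun t ht => Real.rpow_nonneg (hgge t ht) σ
  -- pointwise Łojasiewicz estimate
  have ptwise : ∀ u ∈ Ioo α β, p u ∈ U →
      ‖-(gradient f (p u))‖ ≤ K⁻¹ * (σ * g u ^ (σ - 1) * ‖gradient f (p u)‖^2) := by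
    intro u hu hpU
    set Gu := ‖gradient f (p u)‖ with hGu
    have hGu0 : 0 < Gu := norm_pos_iff.mpr (hgrad u hu)
    have hgu0 : 0 < g u := hgpos u hu
    have hL : g u ≤ c * Gu ^ δ := by
      have := hLoj (p u) hpU
      rwa [abs_of_pos hgu0] at this
    have h1 : g u ^ δ⁻¹ ≤ c ^ δ⁻¹ * Gu := by
      calc g u ^ δ⁻¹ ≤ (c * Gu ^ δ) ^ δ⁻¹ :=
            Real.rpow_le_rpow hgu0.le hL (by positivity)
        _ = c ^ δ⁻¹ * (Gu ^ δ) ^ δ⁻¹ := Real.mul_rpow hc.le (by positivity)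
        _ = c ^ δ⁻¹ * Gu := by
            rw [← Real.rpow_mul hGu0.le, mul_inv_cancel₀ hδ0.ne', Real.rpow_one]
    have hA : 0 < g u ^ δ⁻¹ := Real.rpow_pos_of_pos hgu0 δ⁻¹
    have hC : 0 < c ^ δ⁻¹ := Real.rpow_pos_of_pos hc δ⁻¹
    have hpow : g u ^ (σ - 1) = (g u ^ δ⁻¹)⁻¹ := by
      rw [show σ - 1 = -δ⁻¹ by simp [hσdef], Real.rpow_neg hgu0.le]
    rw [norm_neg, hpow, hKdef, mul_inv, inv_inv]
    have key : σ⁻¹ * c ^ δ⁻¹ * (σ * (g u ^ δ⁻¹)⁻¹ * Gu ^ 2) = c ^ δ⁻¹ * Gu ^ 2 / g u ^ δ⁻¹ := by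
      field_simp
    rw [key, le_div_iff₀ hA]
    nlinarith [mul_le_mul_of_nonneg_left h1 hGu0.le]
  -- key length estimate
  have key : ∀ a b, a ∈ Ioo α β → b ∈ Ioo α β → a ≤ b → (∀ u ∈ Icc a b, p u ∈ U) →
      ‖p b - p a‖ ≤ (h a - h b) / K := by
    intro a b ha hb hab hUmem
    have hsub : Icc a b ⊆ Ioo α β := fun u hu =>
      ⟨lt_of_lt_of_le ha.1 hu.1, lt_of_le_of_lt hu.2 hb.2⟩
    have huIcc : uIcc a b = Icc a b := uIcc_of_le hab
    have cp : ContinuousOn p (Icc a b) := hpc.mono hsub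
    have cder : ContinuousOn (fun u => -(gradient f (p u))) (Icc a b) :=
      (hgc.comp_continuousOn cp).neg
    have cg : ContinuousOn g (Icc a b) := hgcont.mono hsub
    have cG2 : ContinuousOn (fun u => ‖gradient f (p u)‖ ^ 2) (Icc a b) :=
      (hgc.comp_continuousOn cp).norm.pow 2
    have cpow : ContinuousOn (fun u => g u ^ (σ - 1)) (Icc a b) :=
      cg.rpow_const fun u hu => Or.inl (hgpos u (hsub hu)).ne'
    have int1 : IntervalIntegrable (fun u => ‖-(gradient f (p u))‖) MeasureTheory.volume a b :=
      ContinuousOn.intervalIntegrable (by rw [huIcc]; exact cder.norm)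
    have int2 : IntervalIntegrable
        (fun u => K⁻¹ * (σ * g u ^ (σ - 1) * ‖gradient f (p u)‖ ^ 2)) MeasureTheory.volume a b :=
      ContinuousOn.intervalIntegrable (by
        rw [huIcc]
        exact continuousOn_const.mul ((continuousOn_const.mul cpow).mul cG2))
    have intder : IntervalIntegrable (fun u => -(gradient f (p u))) MeasureTheory.volume a b :=
      ContinuousOn.intervalIntegrable (by rw [huIcc]; exact cder)
    have intψ : IntervalIntegrable
        (fun u => -(‖gradient f (p u)‖ ^ 2) * σ * g u ^ (σ - 1)) MeasureTheory.volume a b :=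
      ContinuousOn.intervalIntegrable (by
        rw [huIcc]
        exact (cG2.neg.mul continuousOn_const).mul cpow)
    have eqsub : p b - p a = ∫ u in a..b, -(gradient f (p u)) :=
      (intervalIntegral.integral_eq_sub_of_hasDerivAt
        (fun u hu => hp u (hsub (huIcc ▸ hu))) intder).symm
    have ftc : (∫ u in a..b, -(‖gradient f (p u)‖ ^ 2) * σ * g u ^ (σ - 1)) = h b - h a :=
      intervalIntegral.integral_eq_sub_of_hasDerivAt
        (fun u hu => hh' u (hsub (huIcc ▸ hu))) intψ
    calc ‖p b - p a‖ = ‖∫ u in a..b, -(gradient f (p u))‖ := by rw [eqsub]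
      _ ≤ ∫ u in a..b, ‖-(gradient f (p u))‖ :=
          intervalIntegral.norm_integral_le_integral_norm hab
      _ ≤ ∫ u in a..b, K⁻¹ * (σ * g u ^ (σ - 1) * ‖gradient f (p u)‖ ^ 2) :=
          intervalIntegral.integral_mono_on hab int1 int2
            (fun u hu => ptwise u (hsub hu) (hUmem u hu))
      _ = ∫ u in a..b, K⁻¹ * -(-(‖gradient f (p u)‖ ^ 2) * σ * g u ^ (σ - 1)) :=
          intervalIntegral.integral_congr (fun u _ => by ring)
      _ = K⁻¹ * -(∫ u in a..b, -(‖gradient f (p u)‖ ^ 2) * σ * g u ^ (σ - 1)) := by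
          rw [intervalIntegral.integral_const_mul, intervalIntegral.integral_neg]
      _ = (h a - h b) / K := by rw [ftc]; field_simp; ring
  -- topology
  rw [Metric.tendsto_nhdsWithin_nhds]
  intro ε hε
  obtain ⟨r, hr0, hrU⟩ : ∃ r > 0, Metric.closedBall y r ⊆ U := by
    obtain ⟨r, hr0, hrU⟩ := Metric.mem_nhds_iff.mp hU
    exact ⟨r / 2, by linarith, (Metric.closedBall_subset_ball (by linarith)).trans hrU⟩
  set ε' := min ε r with hε'def
  have hε'0 : 0 < ε' := lt_min hε hr0
  have hε'r : ε' ≤ r := min_le_right _ _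
  have hh0 : Tendsto (fun n => h (tn n)) atTop (nhds 0) := by
    have : Tendsto (fun n => g (tn n) ^ σ) atTop (nhds ((0:ℝ) ^ σ)) :=
      (Real.continuousAt_rpow_const 0 σ (Or.inr hσ.le)).tendsto.comp hgn0
    simpa [Real.zero_rpow hσ.ne'] using this
  have hev1 : ∀ᶠ n in atTop, dist (p (tn n)) y < ε' / 3 := by
    have := hpy (Metric.ball_mem_nhds y (show (0:ℝ) < ε' / 3 by linarith))
    simpa [Metric.mem_ball] using this
  have hev2 : ∀ᶠ n in atTop, h (tn n) / K < ε' / 3 := by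
    have : ∀ᶠ n in atTop, h (tn n) < K * (ε' / 3) :=
      hh0.eventually (eventually_lt_nhds (by positivity))
    exact this.mono fun n hn => (div_lt_iff₀ hK).mpr (by linarith [hn])
  obtain ⟨n, hn1, hn2⟩ := (hev1.and hev2).exists
  set a := tn n with hadef
  have ha : a ∈ Ioo α β := htn n
  have claim : ∀ t ∈ Ioo α β, a ≤ t → dist (p t) y < 2 * ε' / 3 := by
    intro t ht hat
    by_contra hcon
    push_neg at hcon
    set q : ℝ → ℝ := fun s => dist (p s) y with hqdef
    have hsub : Icc a t ⊆ Ioo α β := fun u hu =>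
      ⟨lt_of_lt_of_le ha.1 hu.1, lt_of_le_of_lt hu.2 ht.2⟩
    have hqc : ContinuousOn q (Icc a t) :=
      (continuous_id.dist continuous_const).comp_continuousOn (hpc.mono hsub)
    set B : Set ℝ := Icc a t ∩ q ⁻¹' Ici (2 * ε' / 3) with hBdef
    have hBne : t ∈ B := ⟨⟨hat, le_refl t⟩, hcon⟩
    have hBclosed : IsClosed B :=
      hqc.preimage_isClosed_of_isClosed isClosed_Icc isClosed_Ici
    set s₀ := sInf B with hs₀def
    have hs₀B : s₀ ∈ B := hBclosed.csInf_mem ⟨t, hBne⟩ ⟨a, fun x hx => hx.1.1⟩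
    have hqa : q a < ε' / 3 := hn1
    have hqs₀ : 2 * ε' / 3 ≤ q s₀ := hs₀B.2
    have has₀ : a ≤ s₀ := hs₀B.1.1
    have hqceq : ∃ s₁ ∈ Icc a s₀, q s₁ = 2 * ε' / 3 := by
      have hIcc : Icc a s₀ ⊆ Icc a t := Icc_subset_Icc_right hs₀B.1.2
      have := intermediate_value_Icc has₀ (hqc.mono hIcc)
      have hmem : (2 * ε' / 3) ∈ Icc (q a) (q s₀) := ⟨by linarith, hqs₀⟩
      obtain ⟨s₁, hs₁, hqs₁⟩ := this hmem
      exact ⟨s₁, hs₁, hqs₁⟩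
    obtain ⟨s₁, hs₁, hqs₁⟩ := hqceq
    have hs₁B : s₁ ∈ B :=
      ⟨⟨hs₁.1, le_trans hs₁.2 hs₀B.1.2⟩, le_of_eq hqs₁.symm⟩
    have hs₁s₀ : s₁ = s₀ := le_antisymm hs₁.2 (csInf_le ⟨a, fun x hx => hx.1.1⟩ hs₁B)
    have hqs₀eq : q s₀ = 2 * ε' / 3 := by rw [← hs₁s₀]; exact hqs₁
    have hs₀Ioo : s₀ ∈ Ioo α β := hsub hs₀B.1
    have hmapU : ∀ u ∈ Icc a s₀, p u ∈ U := by
      intro u hu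
      have hqu : q u ≤ 2 * ε' / 3 := by
        rcases eq_or_lt_of_le hu.2 with he | hlt
        · rw [he, hqs₀eq]
        · by_contra hqu'
          push_neg at hqu'
          have : u ∈ B := ⟨⟨hu.1, le_trans hu.2 hs₀B.1.2⟩, hqu'.le⟩
          exact absurd (csInf_le ⟨a, fun x hx => hx.1.1⟩ this) (not_le.mpr hlt)
      apply hrU
      rw [Metric.mem_closedBall]
      calc dist (p u) y ≤ 2 * ε' / 3 := hqu
        _ ≤ r := by linarith
    have hlen : ‖p s₀ - p a‖ ≤ (h a - h s₀) / K := key a s₀ ha hs₀Ioo has₀ hmapU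
    have hha : (h a - h s₀) / K ≤ h a / K :=
      (div_le_div_iff_of_pos_right hK).mpr (by linarith [hhnn s₀ hs₀Ioo])
    have hfin : dist (p s₀) y < 2 * ε' / 3 := by
      have h3 : dist (p s₀) (p a) = ‖p s₀ - p a‖ := dist_eq_norm _ _
      have h4 : h a / K < ε' / 3 := hn2
      calc dist (p s₀) y ≤ dist (p s₀) (p a) + dist (p a) y := dist_triangle _ _ _
        _ < ε' / 3 + ε' / 3 := by
            rw [h3]
            exact add_lt_add (lt_of_le_of_lt (le_trans hlen hha) h4) hn1
        _ = 2 * ε' / 3 := by ring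
    exact absurd hfin (not_lt.mpr hqs₀)
  refine ⟨β - a, by linarith [ha.2], fun {t} ht hdist => ?_⟩
  have hta : a ≤ t := by
    rw [Real.dist_eq, abs_of_neg (by linarith [ht.2] : t - β < 0)] at hdist
    linarith [ha.2]
  calc dist (p t) y < 2 * ε' / 3 := claim t ht hta
    _ ≤ ε := by have := min_le_left ε r; linarith
end

section
/- Let H be a smooth (locally Lipschitz) vector field on a manifold N and p : (α, β) → N a maximal integral curve of H. If there exists q ∈ N with p(t) → q as t → β, then β = +∞ and H(q) = 0. -/
/-!
If `β` were finite, the limit `q` would let us continue `p` past `β`: solve the equation through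
`q` at time `β` (Picard–Lindelöf) and glue. At the junction the glued curve is differentiable
because `p' = H ∘ p → H q`, so it is a longer solution, contradicting maximality.
Hence `β = ∞`; then `p (t + 1) - p t → 0`, while by the mean value inequality this difference
is eventually close to `H q`, so `H q = 0`.
-/

open Set Filter Topology Metric

section

variable {E : Type*} [NormedAddCommGroup E] [NormedSpace ℝ E]

theorem LocallyLipschitz.exists_eq_forall_mem_Ioo_hasDerivAt [CompleteSpace E] {H : E → E}
    (hH : LocallyLipschitz H) (x₀ : E) (t₀ : ℝ) :
    ∃ ε > (0 : ℝ), ∃ γ : ℝ → E, γ t₀ = x₀ ∧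
      ∀ t ∈ Ioo (t₀ - ε) (t₀ + ε), HasDerivAt γ (H (γ t)) t := by
  obtain ⟨K, s, hs, hK⟩ := hH x₀
  obtain ⟨R, hR, hRs⟩ := nhds_basis_closedBall.mem_iff.mp hs
  set L : ℝ := ‖H x₀‖ + K * R
  have hL : 0 ≤ L := by positivity
  have hbound : ∀ x ∈ closedBall x₀ R, ‖H x‖ ≤ L := fun x hx => calc
    ‖H x‖ ≤ ‖H x - H x₀‖ + ‖H x₀‖ := norm_le_norm_sub_add _ _
    _ ≤ K * ‖x - x₀‖ + ‖H x₀‖ := by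
      gcongr; exact hK.norm_sub_le (hRs hx) (hRs (mem_closedBall_self hR.le))
    _ ≤ L := by
      rw [← dist_eq_norm]
      linarith [mul_le_mul_of_nonneg_left (mem_closedBall.mp hx) K.coe_nonneg]
  set ε := R / (L + 1)
  have hε : 0 < ε := by positivity
  have hpl : IsPicardLindelof (fun _ => H) (tmin := t₀ - ε) (tmax := t₀ + ε)
      ⟨t₀, by constructor <;> linarith⟩ x₀ ⟨R, hR.le⟩ 0 ⟨L, hL⟩ K := by
    refine .of_time_independent hbound (hK.mono hRs) ?_
    change L * max (t₀ + ε - t₀) (t₀ - (t₀ - ε)) ≤ R - 0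
    rw [add_sub_cancel_left, sub_sub_cancel, max_self, sub_zero, mul_div_assoc',
      div_le_iff₀ (by positivity)]
    nlinarith
  obtain ⟨γ, hγ₀, hγ⟩ := hpl.exists_eq_forall_mem_Icc_hasDerivWithinAt₀
  exact ⟨ε, hε, γ, hγ₀, fun t ht =>
    (hγ t (Ioo_subset_Icc_self ht)).hasDerivAt (Icc_mem_nhds ht.1 ht.2)⟩

theorem hasDerivWithinAt_Iic_of_continuousWithinAt_Iio {H : E → E} {γ : ℝ → E} {a b : ℝ}
    (hab : a < b) (hH : ContinuousAt H (γ b)) (hγ : ∀ t ∈ Ioo a b, HasDerivAt γ (H (γ t)) t)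
    (hγb : ContinuousWithinAt γ (Iio b) b) : HasDerivWithinAt γ (H (γ b)) (Iic b) b := by
  have hs : Ioo a b ∈ 𝓝[<] b := Ioo_mem_nhdsLT hab
  refine hasDerivWithinAt_Iic_of_tendsto_deriv
    (fun t ht => (hγ t ht).differentiableAt.differentiableWithinAt)
    (hγb.mono Ioo_subset_Iio_self) hs ?_
  exact (hH.tendsto.comp hγb).congr' (eventually_of_mem hs fun t ht => (hγ t ht).deriv.symm)

theorem exists_hasDerivAt_Ioo_of_tendsto_nhdsLT [CompleteSpace E] {H : E → E} {p : ℝ → E}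
    {a b : ℝ} {q : E} (hH : LocallyLipschitz H) (hab : a < b)
    (hp : ∀ t ∈ Ioo a b, HasDerivAt p (H (p t)) t) (hpq : Tendsto p (𝓝[<] b) (𝓝 q)) :
    ∃ c > b, ∃ γ : ℝ → E, EqOn γ p (Iio b) ∧ ∀ t ∈ Ioo a c, HasDerivAt γ (H (γ t)) t := by
  classical
  obtain ⟨ε, hε, σ, hσb, hσ⟩ := hH.exists_eq_forall_mem_Ioo_hasDerivAt q b
  set γ := (Iio b).piecewise p σ
  have hγp : EqOn γ p (Iio b) := fun t ht => piecewise_eq_of_mem _ _ _ ht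
  have hγσ : EqOn γ σ (Ici b) := fun t ht => piecewise_eq_of_notMem _ _ _ (notMem_Iio.mpr ht)
  have hγ_lt : ∀ t ∈ Ioo a b, HasDerivAt γ (H (γ t)) t := fun t ht => by
    rw [hγp ht.2]
    exact (hp t ht).congr_of_eventuallyEq (eventuallyEq_of_mem (Iio_mem_nhds ht.2) hγp)
  refine ⟨b + ε, by linarith, γ, hγp, fun t ht => ?_⟩
  rcases lt_trichotomy t b with htb | rfl | htb
  · exact hγ_lt t ⟨ht.1, htb⟩
  · have hγt : γ t = q := (hγσ self_mem_Ici).trans hσb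
    have hleft : HasDerivWithinAt γ (H (γ t)) (Iic t) t := by
      refine hasDerivWithinAt_Iic_of_continuousWithinAt_Iio ht.1 hH.continuous.continuousAt
        hγ_lt ?_
      rw [ContinuousWithinAt, hγt]
      exact hpq.congr' (eventually_of_mem self_mem_nhdsWithin fun s hs => (hγp hs).symm)
    have hright : HasDerivWithinAt γ (H (γ t)) (Ici t) t := by
      rw [hγσ self_mem_Ici]
      exact (hσ t ⟨by linarith, by linarith⟩).hasDerivWithinAt.congr (fun s hs => hγσ hs)
        (hγσ self_mem_Ici)
    simpa only [Iic_union_Ici, hasDerivWithinAt_univ] using hleft.union hright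
  · rw [hγσ htb.le]
    exact (hσ t ⟨by linarith, ht.2⟩).congr_of_eventuallyEq
      (eventuallyEq_of_mem (Ioi_mem_nhds htb) fun s hs => hγσ (mem_Ici_of_Ioi hs))

theorem eq_zero_of_tendsto_atTop_of_hasDerivAt {f f' : ℝ → E} {q v : E}
    (hf : ∀ᶠ t in atTop, HasDerivAt f (f' t) t) (hfq : Tendsto f atTop (𝓝 q))
    (hf' : Tendsto f' atTop (𝓝 v)) : v = 0 := by
  have hincr : Tendsto (fun t => f (t + 1) - f t) atTop (𝓝 0) := by
    simpa using (hfq.comp (tendsto_atTop_add_const_right _ 1 tendsto_id)).sub hfq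
  refine tendsto_nhds_unique (Metric.tendsto_nhds.mpr fun ε hε => ?_) hincr
  obtain ⟨T, hT⟩ := eventually_atTop.mp (hf.and (Metric.tendsto_nhds.mp hf' (ε / 2) (half_pos hε)))
  filter_upwards [eventually_ge_atTop T] with t ht
  have hmvt := norm_image_sub_le_of_norm_deriv_le_segment' (f := fun s => f s - s • v)
    (C := ε / 2) (fun s hs => (((hT s (ht.trans hs.1)).1.sub
      ((hasDerivAt_id s).smul_const v)).congr_deriv (by rw [one_smul])).hasDerivWithinAt)
    (fun s hs => by rw [← dist_eq_norm]; exact (hT s (ht.trans hs.1)).2.le)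
    (t + 1) ⟨by linarith, le_rfl⟩
  rw [dist_eq_norm]
  calc ‖f (t + 1) - f t - v‖ = ‖f (t + 1) - (t + 1) • v - (f t - t • v)‖ := by
        rw [add_smul, one_smul]; congr 1; abel
    _ ≤ ε / 2 * (t + 1 - t) := hmvt
    _ < ε := by linarith

end

/-- If `p : (α, β) → N` is a maximal integral curve of a locally Lipschitz vector
field `H` and `p t → q ∈ N` as `t → β`, then `β = ∞` and `H q = 0`. -/
theorem stmt_6 {E : Type*} [NormedAddCommGroup E] [NormedSpace ℝ E] [CompleteSpace E]
    (H : E → E) (hH : LocallyLipschitz H)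
    (α : ℝ) (β : EReal) (hαβ : (α : EReal) < β)
    (p : ℝ → E)
    (hp : ∀ t : ℝ, α < t → (t : EReal) < β → HasDerivAt p (H (p t)) t)
    (hmax : ∀ (β' : EReal) (γ : ℝ → E), β < β' →
      (∀ t : ℝ, α < t → (t : EReal) < β' → HasDerivAt γ (H (γ t)) t) →
      ¬ (∀ t : ℝ, α < t → (t : EReal) < β → γ t = p t))
    (q : E)
    (hq : ∀ ε : ℝ, 0 < ε → ∃ T : ℝ, α < T ∧ (T : EReal) < β ∧
      ∀ t : ℝ, T < t → (t : EReal) < β → ‖p t - q‖ < ε) :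
    β = ⊤ ∧ H q = 0 := by
  have hβ : β = ⊤ := by
    by_contra hβ
    lift β to ℝ using ⟨hβ, hαβ.ne_bot⟩ with b
    have hpq : Tendsto p (𝓝[<] b) (𝓝 q) := Metric.tendsto_nhds.mpr fun ε hε => by
      obtain ⟨T, -, hTb, hT⟩ := hq ε hε
      filter_upwards [Ioo_mem_nhdsLT (EReal.coe_lt_coe_iff.mp hTb)] with t ht
      simpa only [dist_eq_norm] using hT t ht.1 (EReal.coe_lt_coe_iff.mpr ht.2)
    obtain ⟨c, hbc, γ, hγp, hγ⟩ := exists_hasDerivAt_Ioo_of_tendsto_nhdsLT hH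
      (EReal.coe_lt_coe_iff.mp hαβ) (fun t ht => hp t ht.1 (EReal.coe_lt_coe_iff.mpr ht.2)) hpq
    exact hmax c γ (EReal.coe_lt_coe_iff.mpr hbc)
      (fun t hαt htc => hγ t ⟨hαt, EReal.coe_lt_coe_iff.mp htc⟩)
      (fun t _ htb => hγp (EReal.coe_lt_coe_iff.mp htb))
  subst hβ
  have hpq : Tendsto p atTop (𝓝 q) := Metric.tendsto_nhds.mpr fun ε hε => by
    obtain ⟨T, -, -, hT⟩ := hq ε hε
    filter_upwards [eventually_gt_atTop T] with t ht
    simpa only [dist_eq_norm] using hT t ht (EReal.coe_lt_top t)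
  refine ⟨rfl, eq_zero_of_tendsto_atTop_of_hasDerivAt (f := p) ?_ hpq
    (hH.continuous.continuousAt.tendsto.comp hpq)⟩
  filter_upwards [eventually_gt_atTop α] with t ht
  exact hp t ht (EReal.coe_lt_top t)
end
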